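/- For every integer m > 1, the join H of m disjoint copies of the 5-cycle C5 contains no induced P3∪K1 and no induced K2∪2K1, and satisfies χ(H) > ω(H) + 1. -/

import Mathlib

open SimpleGraph

/-- `G` contains no induced copy of `H`: there is no graph embedding of `H` into `G`
(graph embeddings are injective maps with `Adj (f a) (f b) ↔ Adj a b`, i.e. induced copies). -/
def IndFree {α : Type*} {V : Type*} (H : SimpleGraph α) (G : SimpleGraph V) : Prop :=
  IsEmpty (H ↪g G)

/-- The Chair: the 5-vertex tree with edges v0v1, v1v2, v2v3, v2v4. -/
def chairGraph : SimpleGraph (Fin 5) :=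
  SimpleGraph.fromEdgeSet {s(0, 1), s(1, 2), s(2, 3), s(2, 4)}

/-- `P4 + K1`: the disjoint union of a path on 4 vertices and an isolated vertex. -/
def p4PlusK1 : SimpleGraph (Fin 5) :=
  SimpleGraph.fromEdgeSet {s(0, 1), s(1, 2), s(2, 3)}

/-- The claw `K_{1,3}`. -/
def clawGraph : SimpleGraph (Fin 4) :=
  SimpleGraph.fromEdgeSet {s(0, 1), s(0, 2), s(0, 3)}

/-- `P3 ∪ K1`: the disjoint union of a path on 3 vertices and an isolated vertex. -/
def p3UnionK1 : SimpleGraph (Fin 4) :=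
  SimpleGraph.fromEdgeSet {s(0, 1), s(1, 2)}

/-- `K2 ∪ 2K1`: the disjoint union of an edge and two isolated vertices. -/
def k2Union2K1 : SimpleGraph (Fin 4) :=
  SimpleGraph.fromEdgeSet {s(0, 1)}

/-- HVN: `K4` on vertices 0,1,2,3 together with vertex 4 joined to exactly 0 and 1. -/
def hvnGraph : SimpleGraph (Fin 5) :=
  SimpleGraph.fromEdgeSet
    {s(0, 1), s(0, 2), s(0, 3), s(1, 2), s(1, 3), s(2, 3), s(0, 4), s(1, 4)}

/-- `K5 - e`: the complete graph on 5 vertices minus one edge. -/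
def k5MinusE : SimpleGraph (Fin 5) :=
  (completeGraph (Fin 5)).deleteEdges {s(0, 1)}

/-- The join of `m` disjoint copies of the 5-cycle `C5`: vertices in the same copy are
adjacent according to `C5`, and all vertices in distinct copies are adjacent. -/
def joinC5 (m : ℕ) : SimpleGraph (Fin m × Fin 5) :=
  SimpleGraph.fromRel (fun p q => p.1 ≠ q.1 ∨ (SimpleGraph.cycleGraph 5).Adj p.2 q.2)

/-!
In the join, two distinct vertices are non-adjacent only if they lie in the same copy and are
non-adjacent in `C5`, so every vertex has exactly two non-neighbours; both `P3 ∪ K1` and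
`K2 ∪ 2K1` have a vertex with three non-neighbours, and an induced embedding cannot decrease the
number of non-neighbours. A clique meets each copy in at most an edge, so `ω ≤ 2m`. A colouring
uses disjoint colour sets on distinct copies and at least three colours on each copy, since `C5`
is an odd cycle, so `χ ≥ 3m > 2m + 1` once `m ≥ 2`.
-/

open Finset

namespace SimpleGraph

variable {α V ι β : Type*}

lemma indFree_of_encard_neighborSet_compl_lt {H : SimpleGraph α} {G : SimpleGraph V} (a : α)
    (h : ∀ v, (Gᶜ.neighborSet v).encard < (Hᶜ.neighborSet a).encard) : IndFree H G := by
  refine ⟨fun e => ?_⟩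
  let f : Hᶜ ↪g Gᶜ := Embedding.complEquiv e
  have hsub : f '' Hᶜ.neighborSet a ⊆ Gᶜ.neighborSet (f a) := f.toHom.image_neighborSet_subset a
  exact (h (f a)).not_ge (f.injective.encard_image _ ▸ Set.encard_le_encard hsub)

lemma encard_neighborSet_compl_of_neighborSet_eq_empty [Fintype α] {H : SimpleGraph α} {a : α}
    (h : H.neighborSet a = ∅) : (Hᶜ.neighborSet a).encard = (Fintype.card α - 1 : ℕ) := by
  classical
  rw [neighborSet_compl, h, Set.compl_empty, ← Set.compl_eq_univ_sdiff,
    ← coe_singleton, ← coe_compl, Set.encard_coe_eq_coe_finsetCard,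
    card_compl, card_singleton]

def joinCopies (G : SimpleGraph β) (ι : Type*) : SimpleGraph (ι × β) :=
  fromRel fun p q => p.1 ≠ q.1 ∨ G.Adj p.2 q.2

variable {G : SimpleGraph β}

@[simp]
lemma joinCopies_adj {p q : ι × β} : (G.joinCopies ι).Adj p q ↔ p.1 ≠ q.1 ∨ G.Adj p.2 q.2 := by
  rw [joinCopies, fromRel_adj]
  constructor
  · rintro ⟨-, h | h⟩
    · exact h
    · exact h.imp Ne.symm G.adj_symm
  · intro h
    refine ⟨?_, Or.inl h⟩
    rintro rfl
    exact h.elim (· rfl) G.irrefl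

lemma neighborSet_compl_joinCopies (p : ι × β) :
    (G.joinCopies ι)ᶜ.neighborSet p = Prod.mk p.1 '' Gᶜ.neighborSet p.2 := by
  obtain ⟨i, b⟩ := p
  ext ⟨j, c⟩
  simp only [mem_neighborSet, compl_adj, joinCopies_adj, Set.mem_image, Prod.mk.injEq]
  constructor
  · rintro ⟨hne, hnadj⟩
    obtain ⟨rfl, hG⟩ : i = j ∧ ¬G.Adj b c := by simpa using hnadj
    exact ⟨c, ⟨fun h => hne (by rw [h]), hG⟩, rfl, rfl⟩
  · rintro ⟨c, ⟨hne, hG⟩, rfl, rfl⟩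
    exact ⟨fun h => hne (congrArg Prod.snd h), by simpa using hG⟩

lemma encard_neighborSet_compl_joinCopies (p : ι × β) :
    ((G.joinCopies ι)ᶜ.neighborSet p).encard = (Gᶜ.neighborSet p.2).encard := by
  rw [neighborSet_compl_joinCopies, (Prod.mk_right_injective p.1).encard_image]

lemma cliqueNum_joinCopies_le [Fintype ι] [Finite β] :
    (G.joinCopies ι).cliqueNum ≤ Fintype.card ι * G.cliqueNum := by
  classical
  obtain ⟨s, hs⟩ := (G.joinCopies ι).exists_isNClique_cliqueNum
  have hfiber (i : ι) : #{p ∈ s | p.1 = i} ≤ G.cliqueNum := by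
    have hinj : Set.InjOn Prod.snd (↑{p ∈ s | p.1 = i} : Set (ι × β)) := by
      intro p hp q hq h
      simp only [coe_filter, Set.mem_ofPred_eq] at hp hq
      exact Prod.ext (hp.2.trans hq.2.symm) h
    have hclique : G.IsClique (↑({p ∈ s | p.1 = i}.image Prod.snd) : Set β) := by
      simp only [coe_image, coe_filter]
      rintro _ ⟨p, ⟨hp, rfl⟩, rfl⟩ _ ⟨q, ⟨hq, hpq⟩, rfl⟩ hne
      have hadj := hs.isClique hp hq fun h => hne (congrArg Prod.snd h)
      simpa [hpq] using hadj
    rw [← card_image_of_injOn hinj]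
    exact hclique.card_le_cliqueNum
  calc (G.joinCopies ι).cliqueNum = #s := hs.card_eq.symm
    _ = ∑ i, #{p ∈ s | p.1 = i} := card_eq_sum_card_fiberwise fun p _ => mem_univ _
    _ ≤ ∑ _i : ι, G.cliqueNum := sum_le_sum fun i _ => hfiber i
    _ = Fintype.card ι * G.cliqueNum := by simp

lemma card_mul_le_of_colorable_joinCopies [Fintype ι] [Fintype β] {k n : ℕ}
    (hk : (k : ℕ∞) ≤ G.chromaticNumber) (hn : (G.joinCopies ι).Colorable n) :
    Fintype.card ι * k ≤ n := by
  classical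
  obtain ⟨C⟩ := hn
  let colors (i : ι) : Finset (Fin n) := univ.image fun b => C (i, b)
  have hcopy (i : ι) : k ≤ #(colors i) := by
    let Ci : G.Coloring (colors i) :=
      Coloring.mk (fun b => ⟨C (i, b), mem_image_of_mem _ (mem_univ b)⟩)
        fun hadj => by simpa using C.valid (joinCopies_adj.2 (Or.inr hadj))
    simpa using le_chromaticNumber_iff_colorable.1 hk _ Ci.colorable
  have hdisj : (↑(univ : Finset ι) : Set ι).PairwiseDisjoint colors := by
    intro i _ j _ hij
    rw [Function.onFun, Finset.disjoint_left]
    simp only [colors, mem_image, mem_univ, true_and]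
    rintro _ ⟨b, rfl⟩ ⟨c, hc⟩
    exact C.valid (joinCopies_adj.2 (Or.inl hij)) hc.symm
  calc Fintype.card ι * k = ∑ _i : ι, k := by simp
    _ ≤ ∑ i, #(colors i) := sum_le_sum fun i _ => hcopy i
    _ = #(univ.biUnion colors) := (card_biUnion hdisj).symm
    _ ≤ n := (card_le_univ _).trans_eq (Fintype.card_fin n)

lemma le_chromaticNumber_joinCopies [Fintype ι] [Fintype β] {k : ℕ}
    (hk : (k : ℕ∞) ≤ G.chromaticNumber) :
    ((Fintype.card ι * k : ℕ) : ℕ∞) ≤ (G.joinCopies ι).chromaticNumber :=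
  le_chromaticNumber_iff_colorable.2 fun _ hn => by
    exact_mod_cast card_mul_le_of_colorable_joinCopies hk hn

lemma cliqueNum_cycleGraph_five_le : (cycleGraph 5).cliqueNum ≤ 2 := by
  obtain ⟨s, hs⟩ := (cycleGraph 5).exists_isNClique_cliqueNum
  have hcliques : ∀ t : Finset (Fin 5), (cycleGraph 5).IsClique (t : Set (Fin 5)) → #t ≤ 2 := by
    decide
  exact hs.card_eq ▸ hcliques s hs.isClique

lemma encard_neighborSet_compl_cycleGraph_five (v : Fin 5) :
    ((cycleGraph 5)ᶜ.neighborSet v).encard = 2 := by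
  rw [← coe_neighborFinset, Set.encard_coe_eq_coe_finsetCard, card_neighborFinset_eq_degree]
  revert v
  decide

end SimpleGraph

theorem joinC5_free_and_chi_gt_omega_add_one (m : ℕ) (hm : 1 < m) :
    IndFree p3UnionK1 (joinC5 m) ∧ IndFree k2Union2K1 (joinC5 m) ∧
      (((joinC5 m).cliqueNum + 1 : ℕ) : ℕ∞) < (joinC5 m).chromaticNumber := by
  have hjoin : joinC5 m = (cycleGraph 5).joinCopies (Fin m) := rfl
  have hnonadj (v : Fin m × Fin 5) : ((joinC5 m)ᶜ.neighborSet v).encard = 2 := by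
    rw [hjoin, encard_neighborSet_compl_joinCopies, encard_neighborSet_compl_cycleGraph_five]
  have p3 : (p3UnionK1ᶜ.neighborSet 3).encard = 3 := by
    rw [encard_neighborSet_compl_of_neighborSet_eq_empty]
    · rfl
    · ext v; fin_cases v <;> simp [p3UnionK1]
  have k2 : (k2Union2K1ᶜ.neighborSet 3).encard = 3 := by
    rw [encard_neighborSet_compl_of_neighborSet_eq_empty]
    · rfl
    · ext v; fin_cases v <;> simp [k2Union2K1]
  refine ⟨indFree_of_encard_neighborSet_compl_lt 3 fun v => ?_,
    indFree_of_encard_neighborSet_compl_lt 3 fun v => ?_, ?_⟩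
  · rw [hnonadj, p3]; decide
  · rw [hnonadj, k2]; decide
  have hω : (joinC5 m).cliqueNum ≤ m * 2 :=
    calc (joinC5 m).cliqueNum ≤ Fintype.card (Fin m) * (cycleGraph 5).cliqueNum :=
          cliqueNum_joinCopies_le
      _ ≤ m * 2 := by
          rw [Fintype.card_fin]
          exact Nat.mul_le_mul_left m cliqueNum_cycleGraph_five_le
  have hχ : ((m * 3 : ℕ) : ℕ∞) ≤ (joinC5 m).chromaticNumber := by
    simpa [hjoin] using le_chromaticNumber_joinCopies (ι := Fin m)
      (chromaticNumber_cycleGraph_of_odd 5 (by norm_num) (by decide)).ge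
  calc (((joinC5 m).cliqueNum + 1 : ℕ) : ℕ∞) < ((m * 3 : ℕ) : ℕ∞) := by
        exact_mod_cast (by omega : (joinC5 m).cliqueNum + 1 < m * 3)
    _ ≤ (joinC5 m).chromaticNumber := hχ
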